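/- Let p > 0 and X_p a random variable with the p-singular Cantor-type distribution F_p. Then E[X_p] = (3/2)·p/(2p+1). -/

import Mathlib

open MeasureTheory Set Filter

/-- The CDF of the p-singular Cantor-type distribution: the monotone increasing
function on [0,1] with F(x/3) = F(x)/(p+1) for x ∈ [0,1] and
F(1-x) = 1 - p·F(x) for x ∈ [0,1/3]. -/
def IsCantorCDFp (p : ℝ) (F : ℝ → ℝ) : Prop :=
  Monotone F ∧
    (∀ x ∈ Set.Icc (0:ℝ) 1, F (x/3) = F x / (p+1)) ∧
    (∀ x ∈ Set.Icc (0:ℝ) (1/3), F (1-x) = 1 - p * F x)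

/-- The mean residual life function of a distribution with CDF F supported on [0,1]:
m(x) = (1/(1-F(x))) ∫_x^1 (1-F(u)) du  (equal to 0 at x = 1 by convention). -/
noncomputable def mrl (F : ℝ → ℝ) (x : ℝ) : ℝ :=
  (∫ u in x..(1:ℝ), (1 - F u)) / (1 - F x)

/-!
With `I = ∫₀¹ F` and `A = ∫₀^{1/3} F`, the self-similarity `F(x/3) = F(x)/(p+1)` gives
`3A = I/(p+1)`, the reflection `F(1-x) = 1 - pF(x)` gives `∫_{2/3}^1 F = 1/3 - pA`, and `F`
is constant `1/(p+1)` on the middle third. Splitting `[0,1]` into thirds yields a linear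
equation for `I`, whose solution is `I = (p+2)/(2(2p+1))`; the mean is `1 - I`.
-/

namespace IsCantorCDFp

variable {p : ℝ} {F : ℝ → ℝ}

theorem map_zero (hp : 0 < p) (hF : IsCantorCDFp p F) : F 0 = 0 := by
  have h := hF.2.1 0 ⟨le_rfl, zero_le_one⟩
  rw [zero_div, eq_div_iff (by linarith)] at h
  have : F 0 * p = 0 := by linarith
  exact (mul_eq_zero.mp this).resolve_right hp.ne'

theorem map_one (hp : 0 < p) (hF : IsCantorCDFp p F) : F 1 = 1 := by
  simpa [hF.map_zero hp] using hF.2.2 0 ⟨le_rfl, by norm_num⟩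

theorem map_one_third (hp : 0 < p) (hF : IsCantorCDFp p F) : F (1 / 3) = 1 / (p + 1) := by
  simpa [hF.map_one hp] using hF.2.1 1 ⟨zero_le_one, le_rfl⟩

theorem map_two_thirds (hp : 0 < p) (hF : IsCantorCDFp p F) : F (2 / 3) = 1 / (p + 1) := by
  have h := hF.2.2 (1 / 3) ⟨by norm_num, le_rfl⟩
  rw [hF.map_one_third hp, show (1 : ℝ) - 1 / 3 = 2 / 3 by norm_num] at h
  rw [h]
  field_simp
  ring

theorem eqOn_middle_third (hp : 0 < p) (hF : IsCantorCDFp p F) :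
    EqOn F (fun _ ↦ 1 / (p + 1)) (Icc (1 / 3) (2 / 3)) := fun _ hx ↦
  le_antisymm (hF.map_two_thirds hp ▸ hF.1 hx.2) (hF.map_one_third hp ▸ hF.1 hx.1)

theorem intervalIntegrable (hF : IsCantorCDFp p F) (a b : ℝ) :
    IntervalIntegrable F volume a b :=
  hF.1.intervalIntegrable

theorem integral_first_third (hF : IsCantorCDFp p F) :
    3 * ∫ x in (0 : ℝ)..1 / 3, F x = (∫ x in (0 : ℝ)..1, F x) / (p + 1) := by
  calc 3 * ∫ x in (0 : ℝ)..1 / 3, F x = ∫ x in (0 : ℝ)..1, F (x / 3) := by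
        rw [intervalIntegral.integral_comp_div F three_ne_zero, zero_div, smul_eq_mul]
    _ = ∫ x in (0 : ℝ)..1, F x / (p + 1) :=
        intervalIntegral.integral_congr fun x hx ↦
          hF.2.1 x (by rwa [uIcc_of_le zero_le_one] at hx)
    _ = (∫ x in (0 : ℝ)..1, F x) / (p + 1) := intervalIntegral.integral_div _ _

theorem integral_last_third (hF : IsCantorCDFp p F) :
    ∫ x in (2 / 3 : ℝ)..1, F x = 1 / 3 - p * ∫ x in (0 : ℝ)..1 / 3, F x := by
  calc ∫ x in (2 / 3 : ℝ)..1, F x = ∫ x in (0 : ℝ)..1 / 3, F (1 - x) := by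
        rw [intervalIntegral.integral_comp_sub_left F 1]
        norm_num
    _ = ∫ x in (0 : ℝ)..1 / 3, (1 - p * F x) :=
        intervalIntegral.integral_congr fun x hx ↦
          hF.2.2 x (by rwa [uIcc_of_le (by norm_num)] at hx)
    _ = 1 / 3 - p * ∫ x in (0 : ℝ)..1 / 3, F x := by
        rw [intervalIntegral.integral_sub intervalIntegrable_const
          ((hF.intervalIntegrable _ _).const_mul p), intervalIntegral.integral_const_mul]
        norm_num

theorem integral_middle_third (hp : 0 < p) (hF : IsCantorCDFp p F) :
    ∫ x in (1 / 3 : ℝ)..2 / 3, F x = 1 / (3 * (p + 1)) := by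
  rw [intervalIntegral.integral_congr
      (fun x hx ↦ hF.eqOn_middle_third hp (by rwa [uIcc_of_le (by norm_num)] at hx)),
    intervalIntegral.integral_const, smul_eq_mul]
  field_simp
  norm_num

theorem integral_eq (hp : 0 < p) (hF : IsCantorCDFp p F) :
    ∫ x in (0 : ℝ)..1, F x = (p + 2) / (2 * (2 * p + 1)) := by
  have hsplit : ∫ x in (0 : ℝ)..1, F x = (∫ x in (0 : ℝ)..1 / 3, F x)
      + (∫ x in (1 / 3 : ℝ)..2 / 3, F x) + ∫ x in (2 / 3 : ℝ)..1, F x := by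
    rw [intervalIntegral.integral_add_adjacent_intervals (hF.intervalIntegrable _ _)
        (hF.intervalIntegrable _ _),
      intervalIntegral.integral_add_adjacent_intervals (hF.intervalIntegrable _ _)
        (hF.intervalIntegrable _ _)]
  have hscale := hF.integral_first_third
  rw [hF.integral_middle_third hp, hF.integral_last_third] at hsplit
  have hp1 : p + 1 ≠ 0 := by linarith
  have h2p1 : 2 * p + 1 ≠ 0 := by linarith
  field_simp at hscale hsplit ⊢
  linear_combination hsplit + (1 - p) * hscale

end IsCantorCDFp

/-- The expected value of the p-singular Cantor-type random variable:
E[X_p] = ∫_0^1 (1 - F_p(u)) du = (3/2)·p/(2p+1). -/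
theorem cantorp_expectation (p : ℝ) (hp : 0 < p) (F : ℝ → ℝ) (hF : IsCantorCDFp p F) :
    ∫ u in (0:ℝ)..1, (1 - F u) = 3/2 * (p / (2 * p + 1)) := by
  rw [intervalIntegral.integral_sub intervalIntegrable_const (hF.intervalIntegrable 0 1),
    hF.integral_eq hp, intervalIntegral.integral_const, smul_eq_mul]
  have h2p1 : 2 * p + 1 ≠ 0 := by linarith
  field_simp
  ring
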